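/- In the lattice setting, let pr₁ : V → V₁ denote the projection along V₂. Then pr₁(L') = N', i.e. the image of the dual lattice L' under the orthogonal projection onto V₁ is exactly the dual lattice of N = L ∩ V₁ inside V₁. -/

import Mathlib

/-!
Orthogonality of `V₁` and `V₂` gives `(pr₁ v, x) = (v, x)` for `x ∈ V₁`, whence `pr₁(L') ⊆ N'`.
Conversely, `N = L ∩ V₁` is saturated in `L` (`L/N` embeds in the `ℚ`-space `V/V₁`), so it is
a direct summand of the free `ℤ`-module `L`. For `w ∈ N'` the functional `(w, ·)` on `N`,
composed with a retraction `L → N`, is an integral functional on `L`; as `L` spans `V` it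
extends `ℚ`-linearly to `V` and is represented by some `v ∈ L'`. Since `N` spans `V₁`,
`(v, ·)` and `(w, ·)` agree on `V₁`, and nondegeneracy forces `pr₁ v = w`.
-/

open Submodule LinearMap

theorem LinearMap.isComplemented_ker_of_isTorsionFree {R M N : Type*} [CommRing R] [IsDomain R]
    [IsPrincipalIdealRing R] [AddCommGroup M] [Module R M] [Module.Finite R M]
    [AddCommGroup N] [Module R N] [Module.IsTorsionFree R N] (f : M →ₗ[R] N) :
    IsComplemented (ker f) := by
  have : Module.IsTorsionFree R (range f) :=
    (range f).injective_subtype.moduleIsTorsionFree _ (range f).subtype.map_smul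
  -- `range f` is free, so `f` onto its range splits
  obtain ⟨s, hs⟩ := Module.projective_lifting_property f.rangeRestrict LinearMap.id
    f.surjective_rangeRestrict
  have hfs : ∀ y, f (s y) = y := fun y => congr_arg Subtype.val (LinearMap.congr_fun hs y)
  refine ⟨_, isCompl_of_proj (f := codRestrict _ (LinearMap.id - s ∘ₗ f.rangeRestrict)
    fun m => by simp [hfs]) fun m => ?_⟩
  have : f.rangeRestrict m = 0 := Subtype.ext (mem_ker.1 m.2)
  ext
  simp [this]

theorem Submodule.isComplemented_comap_subtype {R K V : Type*} [CommRing R] [IsDomain R]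
    [IsPrincipalIdealRing R] [Field K] [Algebra R K] [Module.IsTorsionFree R K]
    [AddCommGroup V] [Module R V] [Module K V] [IsScalarTower R K V]
    (L : Submodule R V) [Module.Finite R L] (W : Submodule K V) :
    IsComplemented ((W.restrictScalars R).comap L.subtype) := by
  have : Module.IsTorsionFree R (V ⧸ W) := .trans K
  convert ((W.mkQ.restrictScalars R) ∘ₗ L.subtype).isComplemented_ker_of_isTorsionFree
  ext l
  simp

section Localization

variable {R R' V : Type*} [CommRing R] [CommRing R'] [Algebra R R'] [AddCommGroup V]
  [Module R V] [Module R' V] [IsScalarTower R R' V] {L : Submodule R V}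

theorem Submodule.isLocalizedModule_subtype (S : Submonoid R) [IsLocalization S R']
    (hL : span R' (L : Set V) = ⊤) : IsLocalizedModule S L.subtype := by
  have := isLocalizedModule_id S V R'
  have htop : L.localized' R' S LinearMap.id = ⊤ := by simpa [localized'_eq_span] using hL
  exact IsLocalizedModule.of_linearEquiv S (L.toLocalized' R' S LinearMap.id)
    ((LinearEquiv.ofTop _ htop).restrictScalars R)

theorem Submodule.span_inter_eq_of_span_eq_top (S : Submonoid R) [IsLocalization S R']
    (hL : span R' (L : Set V) = ⊤) (W : Submodule R' V) : span R' ((L : Set V) ∩ W) = W := by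
  have := L.isLocalizedModule_subtype S hL
  refine le_antisymm (span_le.2 Set.inter_subset_right) fun x hx => ?_
  obtain ⟨⟨l, s⟩, hs : s • x = l⟩ := IsLocalizedModule.surj S L.subtype x
  have hsx : (IsLocalization.map_units R' s).unit • x ∈ span R' ((L : Set V) ∩ W) := by
    rw [Units.smul_def, IsUnit.unit_spec, algebraMap_smul, ← Submonoid.smul_def, hs]
    exact subset_span ⟨l.2, hs ▸ W.smul_of_tower_mem s hx⟩
  exact (smul_mem_iff' _ _).1 hsx

theorem Submodule.exists_linearMap_extend_of_span_eq_top (S : Submonoid R) [IsLocalization S R']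
    {W : Type*} [AddCommGroup W] [Module R W] [Module R' W] [IsScalarTower R R' W]
    (hL : span R' (L : Set V) = ⊤) (φ : L →ₗ[R] W) : ∃ f : V →ₗ[R'] W, ∀ l : L, f l = φ l := by
  have := L.isLocalizedModule_subtype S hL
  have := isLocalizedModule_id S W R'
  have hunit := fun s : S => IsLocalizedModule.map_units (LinearMap.id : W →ₗ[R] W) s
  exact ⟨(IsLocalizedModule.lift S L.subtype φ hunit).extendScalarsOfIsLocalization S R',
    IsLocalizedModule.lift_apply S L.subtype φ hunit⟩

end Localization

theorem LinearMap.SeparatingLeft.exists_forall_apply_eq {R K V : Type*} [CommRing R] [Field K]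
    [Algebra R K] (S : Submonoid R) [IsLocalization S K] [AddCommGroup V] [Module R V]
    [Module K V] [IsScalarTower R K V] [FiniteDimensional K V] {B : V →ₗ[K] V →ₗ[K] K}
    (hB : B.SeparatingLeft) {L : Submodule R V} (hL : span K (L : Set V) = ⊤)
    (φ : L →ₗ[R] K) : ∃ v : V, ∀ l : L, B v l = φ l := by
  obtain ⟨f, hf⟩ := L.exists_linearMap_extend_of_span_eq_top S hL φ
  have hBsurj : Function.Surjective B :=
    (injective_iff_surjective_of_finrank_eq_finrank Subspace.dual_finrank_eq.symm).1
      (ker_eq_bot.1 (separatingLeft_iff_ker_eq_bot.1 hB))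
  obtain ⟨v, rfl⟩ := hBsurj f
  exact ⟨v, hf⟩

section Orthogonal

variable {K V : Type*} [CommRing K] [AddCommGroup V] [Module K V] {B : V →ₗ[K] V →ₗ[K] K}
  {V₁ V₂ : Submodule K V}

theorem apply_projection_eq_of_mem (hsymm : ∀ x y, B x y = B y x)
    (horth : ∀ x ∈ V₁, ∀ y ∈ V₂, B x y = 0) (hc : IsCompl V₁ V₂) (v : V) {x : V}
    (hx : x ∈ V₁) : B (V₁.projection V₂ hc v) x = B v x := by
  conv_rhs => rw [← projection_add_projection_eq_self hc v]
  rw [map_add, LinearMap.add_apply, hsymm (V₂.projection V₁ hc.symm v),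
    horth x hx _ (projection_apply_mem _ _), add_zero]

theorem projection_eq_of_forall_apply_eq (hB : B.SeparatingLeft)
    (hsymm : ∀ x y, B x y = B y x) (horth : ∀ x ∈ V₁, ∀ y ∈ V₂, B x y = 0)
    (hc : IsCompl V₁ V₂) {v w : V} (hw : w ∈ V₁) (h : ∀ x ∈ V₁, B v x = B w x) :
    V₁.projection V₂ hc v = w := by
  set u := V₁.projection V₂ hc v - w
  have hu : u ∈ V₁ := sub_mem (projection_apply_mem _ _) hw
  refine sub_eq_zero.1 (hB u fun z => ?_)
  rw [← projection_add_projection_eq_self hc z, map_add, horth u hu _ (projection_apply_mem _ _),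
    add_zero, map_sub, LinearMap.sub_apply, apply_projection_eq_of_mem hsymm horth hc v
    (projection_apply_mem _ _), h _ (projection_apply_mem _ _), sub_self]

end Orthogonal

theorem stmt14
    (V : Type*) [AddCommGroup V] [Module ℚ V] [FiniteDimensional ℚ V]
    (B : V →ₗ[ℚ] V →ₗ[ℚ] ℚ)
    (hsymm : ∀ x y : V, B x y = B y x)
    (hnd : ∀ v : V, (∀ w : V, B v w = 0) → v = 0)
    (V₁ V₂ : Submodule ℚ V) (hcompl : IsCompl V₁ V₂)
    (horth : ∀ x ∈ V₁, ∀ y ∈ V₂, B x y = 0)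
    (L : Submodule ℤ V) (hLfg : L.FG)
    (hLspan : Submodule.span ℚ (L : Set V) = ⊤) :
    (fun v : V => ((Submodule.linearProjOfIsCompl V₁ V₂ hcompl v : V₁) : V)) ''
        {v : V | ∀ l ∈ L, ∃ n : ℤ, B v l = (n : ℚ)}
      = {v : V | v ∈ V₁ ∧ ∀ x ∈ (L : Set V) ∩ (V₁ : Set V), ∃ n : ℤ, B v x = (n : ℚ)} := by
  have hB : B.SeparatingLeft := hnd
  show (V₁.projection V₂ hcompl) '' _ = _
  ext w
  constructor
  · rintro ⟨v, hv, rfl⟩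
    refine ⟨projection_apply_mem hcompl v, fun x ⟨hxL, hx⟩ => ?_⟩
    simpa only [apply_projection_eq_of_mem hsymm horth hcompl v hx] using hv x hxL
  · rintro ⟨hw, hwN⟩
    have : Module.Finite ℤ L := Module.Finite.iff_fg.mpr hLfg
    set N := (V₁.restrictScalars ℤ).comap L.subtype
    obtain ⟨C, hC⟩ := L.isComplemented_comap_subtype V₁
    obtain ⟨v, hv⟩ := hB.exists_forall_apply_eq (nonZeroDivisors ℤ) hLspan
      ((B w).restrictScalars ℤ ∘ₗ L.subtype ∘ₗ N.subtype ∘ₗ N.projectionOnto C hC)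
    have hvN : Set.EqOn (B v) (B w) ((L : Set V) ∩ V₁) := by
      rintro l ⟨hlL, hl⟩
      have hlN : (⟨l, hlL⟩ : L) ∈ N := hl
      rw [hv ⟨l, hlL⟩]
      show B w (N.projectionOnto C hC ⟨l, hlL⟩ : L) = B w l
      rw [projectionOnto_apply_of_mem_left hC hlN]
    refine ⟨v, fun l hl => ?_, projection_eq_of_forall_apply_eq hB hsymm horth hcompl hw
      fun x hx => eqOn_span' hvN ?_⟩
    · rw [hv ⟨l, hl⟩]
      exact hwN _ ⟨(N.projectionOnto C hC _ : L).2, (N.projectionOnto C hC _).2⟩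
    · rwa [L.span_inter_eq_of_span_eq_top (nonZeroDivisors ℤ) hLspan V₁]
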